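/- Let (Z_k)_{k≥1} be i.i.d. nonnegative random variables with m_ε := E[Z_1^ε] < ∞ for some 0 < ε < 1, and let t be a positive-integer-valued random variable with P(t > n) ≤ c n^{-1/2} for all n ≥ 1. Then for any 0 < r < ε/5, the random variable B = Σ_{k=1}^{t} Z_k satisfies E[B^r] < ∞. -/

import Mathlib

/-!
Cut the random sum at `L = ⌈x ^ (2ε/3)⌉`. On `{t ≤ L}`, subadditivity of `u ↦ u ^ ε` gives
`B ^ ε ≤ ∑_{k ≤ L} Z_k ^ ε`, so Markov's inequality bounds `P(x < B, t ≤ L)` by `L m_ε x ^ (-ε)`,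
while `P(L < t) ≤ c L ^ (-1/2)`; both are `O(x ^ (-ε/3))`. By the layer-cake formula a tail
`P(x < B) = O(x ^ (-p))` gives `E[B ^ r] < ∞` for every `r < p`, and `r < ε/5 < ε/3`.
-/

open MeasureTheory ProbabilityTheory Finset
open scoped ENNReal

theorem lintegral_rpow_lt_top_of_meas_lt_le {Ω : Type*} [MeasurableSpace Ω] {μ : Measure Ω}
    [IsFiniteMeasure μ] {X : Ω → ℝ} (hXnn : 0 ≤ᵐ[μ] X) (hX : AEMeasurable X μ) {r p : ℝ}
    (hr : 0 < r) (hrp : r < p) {C : ℝ≥0∞} (hC : C ≠ ⊤)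
    (htail : ∀ x, 1 < x → μ {ω | x < X ω} ≤ C * ENNReal.ofReal (x ^ (-p))) :
    ∫⁻ ω, ENNReal.ofReal (X ω ^ r) ∂μ < ⊤ := by
  rw [lintegral_rpow_eq_lintegral_meas_lt_mul μ hXnn hX hr]
  refine ENNReal.mul_lt_top ENNReal.ofReal_lt_top ?_
  rw [← Set.Ioc_union_Ioi_eq_Ioi zero_le_one,
    lintegral_union measurableSet_Ioi Set.Ioc_disjoint_Ioi_same]
  refine ENNReal.add_lt_top.2 ⟨?_, ?_⟩
  · have hint : IntegrableOn (fun t : ℝ => t ^ (r - 1)) (Set.Ioc 0 1) :=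
      (intervalIntegrable_iff_integrableOn_Ioc_of_le zero_le_one).1
        (intervalIntegral.intervalIntegrable_rpow' (by linarith))
    calc ∫⁻ t in Set.Ioc 0 1, μ {ω | t < X ω} * ENNReal.ofReal (t ^ (r - 1))
        ≤ ∫⁻ t in Set.Ioc 0 1, μ Set.univ * ENNReal.ofReal (t ^ (r - 1)) :=
          lintegral_mono fun t => by gcongr; exact Set.subset_univ _
      _ = μ Set.univ * ∫⁻ t in Set.Ioc 0 1, ENNReal.ofReal (t ^ (r - 1)) :=
          lintegral_const_mul _ (by fun_prop)
      _ < ⊤ := ENNReal.mul_lt_top (measure_lt_top μ _) hint.lintegral_lt_top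
  · have hint : IntegrableOn (fun t : ℝ => t ^ (r - 1 - p)) (Set.Ioi 1) :=
      integrableOn_Ioi_rpow_of_lt (by linarith) one_pos
    calc ∫⁻ t in Set.Ioi 1, μ {ω | t < X ω} * ENNReal.ofReal (t ^ (r - 1))
        ≤ ∫⁻ t in Set.Ioi 1, C * ENNReal.ofReal (t ^ (r - 1 - p)) := by
          refine setLIntegral_mono (by fun_prop) fun t (ht : 1 < t) => ?_
          have ht0 : 0 < t := one_pos.trans ht
          calc μ {ω | t < X ω} * ENNReal.ofReal (t ^ (r - 1))
              ≤ C * ENNReal.ofReal (t ^ (-p)) * ENNReal.ofReal (t ^ (r - 1)) := by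
                gcongr; exact htail t ht
            _ = C * ENNReal.ofReal (t ^ (r - 1 - p)) := by
                rw [mul_assoc, ← ENNReal.ofReal_mul (by positivity), ← Real.rpow_add ht0]
                ring_nf
      _ = C * ∫⁻ t in Set.Ioi 1, ENNReal.ofReal (t ^ (r - 1 - p)) :=
          lintegral_const_mul _ (by fun_prop)
      _ < ⊤ := ENNReal.mul_lt_top hC.lt_top hint.lintegral_lt_top

theorem Real.rpow_sum_le_sum_rpow {ι : Type*} (s : Finset ι) {f : ι → ℝ} (hf : ∀ i, 0 ≤ f i)
    {p : ℝ} (hp : 0 < p) (hp1 : p ≤ 1) : (∑ i ∈ s, f i) ^ p ≤ ∑ i ∈ s, f i ^ p := by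
  induction s using Finset.cons_induction with
  | empty => simp [Real.zero_rpow hp.ne']
  | cons a s _ ih =>
    rw [sum_cons, sum_cons]
    calc (f a + ∑ i ∈ s, f i) ^ p ≤ f a ^ p + (∑ i ∈ s, f i) ^ p :=
          Real.rpow_add_le_add_rpow (hf a) (sum_nonneg fun i _ => hf i) hp.le hp1
      _ ≤ f a ^ p + ∑ i ∈ s, f i ^ p := by gcongr

theorem lintegral_sum_comp_eq_card_mul {Ω ι β : Type*} [MeasurableSpace Ω] [MeasurableSpace β]
    {μ : Measure Ω} {Z : ι → Ω → β} (hZ : ∀ i, Measurable (Z i)) {g : β → ℝ≥0∞}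
    (hg : Measurable g) {s : Finset ι} {j : ι} (hid : ∀ i ∈ s, μ.map (Z i) = μ.map (Z j)) :
    ∫⁻ ω, ∑ i ∈ s, g (Z i ω) ∂μ = #s * ∫⁻ ω, g (Z j ω) ∂μ := by
  rw [lintegral_finsetSum (f := fun i ω => g (Z i ω)) s fun i _ => hg.comp (hZ i)]
  have hident : ∀ i ∈ s, ∫⁻ ω, g (Z i ω) ∂μ = ∫⁻ ω, g (Z j ω) ∂μ := fun i hi =>
    ((IdentDistrib.mk (hZ i).aemeasurable (hZ j).aemeasurable (hid i hi)).comp hg).lintegral_eq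
  rw [sum_congr rfl hident, sum_const, nsmul_eq_mul]

section RandomSum

variable {Ω : Type*} {Z : ℕ → Ω → ℝ} {t : Ω → ℕ}

def randomSum (Z : ℕ → Ω → ℝ) (t : Ω → ℕ) (ω : Ω) : ℝ := ∑ k ∈ Icc 1 (t ω), Z k ω

theorem randomSum_nonneg (hZnn : ∀ k ω, 0 ≤ Z k ω) (ω : Ω) : 0 ≤ randomSum Z t ω :=
  sum_nonneg fun k _ => hZnn k ω

theorem rpow_le_sum_rpow_of_lt_randomSum (hZnn : ∀ k ω, 0 ≤ Z k ω) {ε : ℝ} (hε0 : 0 < ε)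
    (hε1 : ε ≤ 1) {x : ℝ} (hx : 0 < x) {L : ℕ} {ω : Ω} (hω : x < randomSum Z t ω)
    (htL : t ω ≤ L) : x ^ ε ≤ ∑ k ∈ Icc 1 L, Z k ω ^ ε :=
  calc x ^ ε ≤ (∑ k ∈ Icc 1 L, Z k ω) ^ ε := by
        refine Real.rpow_le_rpow hx.le (hω.le.trans ?_) hε0.le
        exact sum_le_sum_of_subset_of_nonneg (Icc_subset_Icc le_rfl htL)
          fun k _ _ => hZnn k ω
    _ ≤ ∑ k ∈ Icc 1 L, Z k ω ^ ε := Real.rpow_sum_le_sum_rpow _ (fun k => hZnn k ω) hε0 hε1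

variable [MeasurableSpace Ω] {μ : Measure Ω}

theorem measurable_randomSum (hZ : ∀ k, Measurable (Z k)) (ht : Measurable t) :
    Measurable (randomSum Z t) := by
  have hsum : Measurable fun p : Ω × ℕ => ∑ k ∈ Icc 1 p.2, Z k p.1 :=
    measurable_from_prod_countable_left fun n =>
      (measurable_sum _ fun k _ => hZ k : Measurable fun ω => ∑ k ∈ Icc 1 n, Z k ω)
  exact hsum.comp (measurable_id.prodMk ht)

theorem meas_lt_randomSum_le (hZ : ∀ k, Measurable (Z k)) (hZnn : ∀ k ω, 0 ≤ Z k ω)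
    (hid : ∀ k, 1 ≤ k → μ.map (Z k) = μ.map (Z 1)) {ε : ℝ} (hε0 : 0 < ε) (hε1 : ε ≤ 1)
    {x : ℝ} (hx : 0 < x) (L : ℕ) :
    μ {ω | x < randomSum Z t ω}
      ≤ L * (∫⁻ ω, ENNReal.ofReal (Z 1 ω ^ ε) ∂μ) / ENNReal.ofReal (x ^ ε)
        + μ {ω | L < t ω} := by
  set S : Ω → ℝ≥0∞ := fun ω => ∑ k ∈ Icc 1 L, ENNReal.ofReal (Z k ω ^ ε)
  have hincl : {ω | x < randomSum Z t ω}
      ⊆ {ω | ENNReal.ofReal (x ^ ε) ≤ S ω} ∪ {ω | L < t ω} := by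
    intro ω hω
    rcases le_or_gt (t ω) L with htL | hLt
    · left
      show _ ≤ ∑ k ∈ Icc 1 L, ENNReal.ofReal (Z k ω ^ ε)
      rw [← ENNReal.ofReal_sum_of_nonneg fun k _ => Real.rpow_nonneg (hZnn k ω) ε]
      exact ENNReal.ofReal_le_ofReal (rpow_le_sum_rpow_of_lt_randomSum hZnn hε0 hε1 hx hω htL)
    · exact Or.inr hLt
  have hS : ∫⁻ ω, S ω ∂μ = L * ∫⁻ ω, ENNReal.ofReal (Z 1 ω ^ ε) ∂μ := by
    rw [lintegral_sum_comp_eq_card_mul (g := fun z => ENNReal.ofReal (z ^ ε)) hZ (by fun_prop)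
        fun k hk => hid k (mem_Icc.1 hk).1,
      Nat.card_Icc, Nat.add_sub_cancel]
  have hmarkov : μ {ω | ENNReal.ofReal (x ^ ε) ≤ S ω}
      ≤ (∫⁻ ω, S ω ∂μ) / ENNReal.ofReal (x ^ ε) :=
    meas_ge_le_lintegral_div (by fun_prop)
      (ENNReal.ofReal_pos.2 (Real.rpow_pos_of_pos hx ε)).ne' ENNReal.ofReal_ne_top
  calc μ {ω | x < randomSum Z t ω}
      ≤ μ {ω | ENNReal.ofReal (x ^ ε) ≤ S ω} + μ {ω | L < t ω} :=
        (measure_mono hincl).trans (measure_union_le _ _)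
    _ ≤ _ := by rw [← hS]; gcongr

theorem meas_lt_randomSum_le_rpow (hZ : ∀ k, Measurable (Z k)) (hZnn : ∀ k ω, 0 ≤ Z k ω)
    (hid : ∀ k, 1 ≤ k → μ.map (Z k) = μ.map (Z 1)) {ε : ℝ} (hε0 : 0 < ε) (hε1 : ε ≤ 1)
    {c : ℝ} (htail : ∀ n : ℕ, 1 ≤ n →
      μ {ω | n < t ω} ≤ ENNReal.ofReal (c * (n : ℝ) ^ (-(1 / 2) : ℝ)))
    {x : ℝ} (hx : 1 < x) :
    μ {ω | x < randomSum Z t ω}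
      ≤ (2 * ∫⁻ ω, ENNReal.ofReal (Z 1 ω ^ ε) ∂μ + ENNReal.ofReal c)
        * ENNReal.ofReal (x ^ (-(ε / 3))) := by
  set M := ∫⁻ ω, ENNReal.ofReal (Z 1 ω ^ ε) ∂μ
  have hx0 : 0 < x := one_pos.trans hx
  set y := x ^ (2 * ε / 3)
  have hy : 1 < y := Real.one_lt_rpow hx (by positivity)
  set L := ⌈y⌉₊
  have hyL : y ≤ L := Nat.le_ceil y
  have hL1 : 1 ≤ L := Nat.one_le_ceil_iff.2 (by linarith)
  have hLy : (L : ℝ≥0∞) ≤ ENNReal.ofReal (2 * y) := by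
    rw [← ENNReal.ofReal_natCast]
    exact ENNReal.ofReal_le_ofReal (Nat.ceil_le_two_mul (by linarith))
  have hfirst : L * M / ENNReal.ofReal (x ^ ε) ≤ 2 * M * ENNReal.ofReal (x ^ (-(ε / 3))) :=
    calc L * M / ENNReal.ofReal (x ^ ε) = L * M * ENNReal.ofReal (x ^ (-ε)) := by
          rw [div_eq_mul_inv, ← ENNReal.ofReal_inv_of_pos (by positivity), Real.rpow_neg hx0.le]
      _ ≤ ENNReal.ofReal (2 * y) * M * ENNReal.ofReal (x ^ (-ε)) := by gcongr
      _ = 2 * M * ENNReal.ofReal (x ^ (-(ε / 3))) := by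
          have hexp : 2 * y * x ^ (-ε) = 2 * x ^ (-(ε / 3)) := by
            rw [mul_assoc, ← Real.rpow_add hx0]; ring_nf
          rw [mul_right_comm, ← ENNReal.ofReal_mul (by positivity), hexp,
            ENNReal.ofReal_mul zero_le_two, ENNReal.ofReal_ofNat, mul_right_comm]
  have hsecond : μ {ω | L < t ω} ≤ ENNReal.ofReal c * ENNReal.ofReal (x ^ (-(ε / 3))) :=
    calc μ {ω | L < t ω} ≤ ENNReal.ofReal c * ENNReal.ofReal ((L : ℝ) ^ (-(1 / 2) : ℝ)) := by
          rw [← ENNReal.ofReal_mul' (by positivity)]; exact htail L hL1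
      _ ≤ ENNReal.ofReal c * ENNReal.ofReal (y ^ (-(1 / 2) : ℝ)) := by
          gcongr ENNReal.ofReal c * ENNReal.ofReal ?_
          exact Real.rpow_le_rpow_of_nonpos (by positivity) hyL (by norm_num)
      _ = ENNReal.ofReal c * ENNReal.ofReal (x ^ (-(ε / 3))) := by
          rw [← Real.rpow_mul hx0.le]; ring_nf
  calc μ {ω | x < randomSum Z t ω} ≤ L * M / ENNReal.ofReal (x ^ ε) + μ {ω | L < t ω} :=
        meas_lt_randomSum_le hZ hZnn hid hε0 hε1 hx0 L
    _ ≤ 2 * M * ENNReal.ofReal (x ^ (-(ε / 3)))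
        + ENNReal.ofReal c * ENNReal.ofReal (x ^ (-(ε / 3))) := add_le_add hfirst hsecond
    _ = (2 * M + ENNReal.ofReal c) * ENNReal.ofReal (x ^ (-(ε / 3))) := (add_mul _ _ _).symm

end RandomSum

theorem stmt_14_general {Ω : Type*} [MeasurableSpace Ω] (μ : Measure Ω) [IsProbabilityMeasure μ]
    (Z : ℕ → Ω → ℝ) (hZmeas : ∀ k, Measurable (Z k)) (hZnn : ∀ k ω, 0 ≤ Z k ω)
    (hid : ∀ k : ℕ, 1 ≤ k → Measure.map (Z k) μ = Measure.map (Z 1) μ)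
    {ε : ℝ} (hε0 : 0 < ε) (hε1 : ε < 1)
    (hmom : Integrable (fun ω => Z 1 ω ^ ε) μ)
    (t : Ω → ℕ) (htmeas : Measurable t)
    {c : ℝ} (htail : ∀ n : ℕ, 1 ≤ n →
      μ {ω | n < t ω} ≤ ENNReal.ofReal (c * (n : ℝ) ^ (-(1 / 2) : ℝ)))
    {r : ℝ} (hr0 : 0 < r) (hr : r < ε / 5) :
    ∫⁻ ω, ENNReal.ofReal ((∑ k ∈ Icc 1 (t ω), Z k ω) ^ r) ∂μ < ⊤ := by
  have hC : 2 * ∫⁻ ω, ENNReal.ofReal (Z 1 ω ^ ε) ∂μ + ENNReal.ofReal c ≠ ⊤ :=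
    ENNReal.add_ne_top.2 ⟨ENNReal.mul_ne_top ENNReal.ofNat_ne_top hmom.lintegral_lt_top.ne,
      ENNReal.ofReal_ne_top⟩
  exact lintegral_rpow_lt_top_of_meas_lt_le (ae_of_all _ (randomSum_nonneg hZnn))
    (measurable_randomSum hZmeas htmeas).aemeasurable hr0 (by linarith) hC
    fun x hx => meas_lt_randomSum_le_rpow hZmeas hZnn hid hε0 hε1.le htail hx

/-- If `(Z_k)` are i.i.d. nonnegative with `E[Z_1^ε] < ∞` for some `0 < ε < 1`, and `t`
is a positive-integer-valued random variable with `P(t > n) ≤ c n^{-1/2}`, then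
`B = Σ_{k=1}^t Z_k` satisfies `E[B^r] < ∞` for every `0 < r < ε/5`. -/
theorem stmt_14 {Ω : Type*} [MeasurableSpace Ω] (μ : Measure Ω) [IsProbabilityMeasure μ]
    (Z : ℕ → Ω → ℝ) (hZmeas : ∀ k, Measurable (Z k)) (hZnn : ∀ k ω, 0 ≤ Z k ω)
    (hiid : iIndepFun (fun k ω => Z (k + 1) ω) μ)
    (hid : ∀ k : ℕ, 1 ≤ k → Measure.map (Z k) μ = Measure.map (Z 1) μ)
    {ε : ℝ} (hε0 : 0 < ε) (hε1 : ε < 1)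
    (hmom : Integrable (fun ω => Z 1 ω ^ ε) μ)
    (t : Ω → ℕ) (htmeas : Measurable t) (ht1 : ∀ ω, 1 ≤ t ω)
    {c : ℝ} (htail : ∀ n : ℕ, 1 ≤ n →
      μ {ω | n < t ω} ≤ ENNReal.ofReal (c * (n : ℝ) ^ (-(1 / 2) : ℝ)))
    {r : ℝ} (hr0 : 0 < r) (hr : r < ε / 5) :
    ∫⁻ ω, ENNReal.ofReal ((∑ k ∈ Icc 1 (t ω), Z k ω) ^ r) ∂μ < ⊤ :=
  stmt_14_general μ Z hZmeas hZnn hid hε0 hε1 hmom t htmeas htail hr0 hr
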